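/- arXiv:quant-ph/0207161 — 5 statements merged into one kernel-verified Lean document; each statement's English description precedes it below -/
import Mathlib

section
/- The 4×4 Hermitian matrix ρ = (1/4)(I⊗I + Σᵢ₌₁³ tᵢ σᵢ⊗σᵢ) is positive semidefinite if and only if 1+t₁−t₂+t₃ ≥ 0, 1−t₁+t₂+t₃ ≥ 0, 1+t₁+t₂−t₃ ≥ 0, and 1−t₁−t₂−t₃ ≥ 0. -/
/-!
The Bell states are common eigenvectors of σ₁⊗σ₁, σ₂⊗σ₂, σ₃⊗σ₃ (with eigenvalues ±1), so
congruence by the invertible matrix of Bell vectors turns ρ into a diagonal matrix whose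
entries are positive multiples of 1 ± t₁ ± t₂ ± t₃, and such a congruence preserves positive
semidefiniteness.
-/

open Matrix Kronecker Complex BigOperators

noncomputable section

/-- Pauli matrices -/
def σ1 : Matrix (Fin 2) (Fin 2) ℂ := !![0, 1; 1, 0]
def σ2 : Matrix (Fin 2) (Fin 2) ℂ := !![0, -Complex.I; Complex.I, 0]
def σ3 : Matrix (Fin 2) (Fin 2) ℂ := !![1, 0; 0, -1]

/-- Kronecker product of two 2×2 matrices as a 4×4 matrix in the
computational basis |00⟩,|01⟩,|10⟩,|11⟩. -/
def kron4 (A B : Matrix (Fin 2) (Fin 2) ℂ) : Matrix (Fin 4) (Fin 4) ℂ :=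
  Matrix.reindex finProdFinEquiv finProdFinEquiv (A ⊗ₖ B)

/-- Bell-diagonal (Bell decomposable) state with correlation parameters t₁,t₂,t₃. -/
def ρBD (t1 t2 t3 : ℝ) : Matrix (Fin 4) (Fin 4) ℂ :=
  (1/4 : ℂ) • ((1 : Matrix (Fin 4) (Fin 4) ℂ)
    + (t1 : ℂ) • kron4 σ1 σ1 + (t2 : ℂ) • kron4 σ2 σ2 + (t3 : ℂ) • kron4 σ3 σ3)

/-- rank-one projector |v⟩⟨v| on C⁴ -/
def proj4 (v : Fin 4 → ℂ) : Matrix (Fin 4) (Fin 4) ℂ := Matrix.vecMulVec v (star v)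
def proj2 (v : Fin 2 → ℂ) : Matrix (Fin 2) (Fin 2) ℂ := Matrix.vecMulVec v (star v)

/-- The four Bell states -/
def bell : Fin 4 → (Fin 4 → ℂ)
  | 0 => ![(Real.sqrt 2)⁻¹, 0, 0, (Real.sqrt 2)⁻¹]
  | 1 => ![(Real.sqrt 2)⁻¹, 0, 0, -(Real.sqrt 2)⁻¹]
  | 2 => ![0, (Real.sqrt 2)⁻¹, (Real.sqrt 2)⁻¹, 0]
  | 3 => ![0, (Real.sqrt 2)⁻¹, -(Real.sqrt 2)⁻¹, 0]

lemma kron4_eq (A B : Matrix (Fin 2) (Fin 2) ℂ) : kron4 A B =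
    !![A 0 0 * B 0 0, A 0 0 * B 0 1, A 0 1 * B 0 0, A 0 1 * B 0 1;
       A 0 0 * B 1 0, A 0 0 * B 1 1, A 0 1 * B 1 0, A 0 1 * B 1 1;
       A 1 0 * B 0 0, A 1 0 * B 0 1, A 1 1 * B 0 0, A 1 1 * B 0 1;
       A 1 0 * B 1 0, A 1 0 * B 1 1, A 1 1 * B 1 0, A 1 1 * B 1 1] := by
  ext i j
  fin_cases i <;> fin_cases j <;> rfl

lemma ρBD_eq (t1 t2 t3 : ℝ) : ρBD t1 t2 t3 =
    !![((1 + t3) / 4 : ℂ), 0, 0, (t1 - t2) / 4;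
       0, (1 - t3) / 4, (t1 + t2) / 4, 0;
       0, (t1 + t2) / 4, (1 - t3) / 4, 0;
       (t1 - t2) / 4, 0, 0, (1 + t3) / 4] := by
  ext i j
  fin_cases i <;> fin_cases j <;> simp [ρBD, kron4_eq, σ1, σ2, σ3, one_apply] <;> ring

/-- The columns are `√2` times the Bell states `bell 0, …, bell 3`. -/
def bellBasis : Matrix (Fin 4) (Fin 4) ℂ :=
  !![1, 1, 0, 0;
     0, 0, 1, 1;
     0, 0, 1, -1;
     1, -1, 0, 0]

lemma star_bellBasis_mul_self : star bellBasis * bellBasis = (2 : ℂ) • 1 := by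
  ext i j
  fin_cases i <;> fin_cases j <;>
    simp [bellBasis, star_eq_conjTranspose, mul_apply, Fin.sum_univ_four] <;> norm_num

lemma isUnit_bellBasis : IsUnit bellBasis := by
  refine (isUnit_iff_isUnit_det _).2 <|
    isUnit_det_of_left_inverse (B := (1 / 2 : ℂ) • star bellBasis) ?_
  rw [smul_mul_assoc, star_bellBasis_mul_self, smul_smul]
  norm_num

def bellWeights (t1 t2 t3 : ℝ) : Fin 4 → ℝ :=
  ![1 + t1 - t2 + t3, 1 - t1 + t2 + t3, 1 + t1 + t2 - t3, 1 - t1 - t2 - t3]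

lemma star_bellBasis_mul_ρBD_mul_bellBasis (t1 t2 t3 : ℝ) :
    star bellBasis * ρBD t1 t2 t3 * bellBasis =
      diagonal fun i => ((bellWeights t1 t2 t3 i / 2 : ℝ) : ℂ) := by
  rw [ρBD_eq]
  ext i j
  fin_cases i <;> fin_cases j <;>
    simp [bellBasis, bellWeights, star_eq_conjTranspose, mul_apply, Fin.sum_univ_four] <;> ring

open scoped ComplexOrder in
/-- ρ = (1/4)(I⊗I + Σ tᵢσᵢ⊗σᵢ) is positive semidefinite iff the
four tetrahedron inequalities hold. -/
theorem bd_posSemidef_iff (t1 t2 t3 : ℝ) :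
    (ρBD t1 t2 t3).PosSemidef ↔
      0 ≤ 1 + t1 - t2 + t3 ∧ 0 ≤ 1 - t1 + t2 + t3 ∧
      0 ≤ 1 + t1 + t2 - t3 ∧ 0 ≤ 1 - t1 - t2 - t3 := by
  rw [← isUnit_bellBasis.posSemidef_star_left_conjugate_iff,
    star_bellBasis_mul_ρBD_mul_bellBasis, posSemidef_diagonal_iff]
  simp only [Complex.zero_le_real, le_div_iff₀ (two_pos : (0 : ℝ) < 2), zero_mul,
    Fin.forall_fin_succ, IsEmpty.forall_iff, and_true]
  rfl

end
end

section
/- For a Bell decomposable state ρ with p₄ > 1/2 (equivalently 3+t₁+t₂+t₃ < 2), setting λ = (3+t₁+t₂+t₃)/2 and ρ_s the state with parameters t' given by the projection formula, one has the exact decomposition ρ = λ ρ_s + (1−λ)|ψ⁻⟩⟨ψ⁻|, with λ ∈ [0,1). -/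
open Matrix Kronecker Complex BigOperators

noncomputable section

/-! The map `t ↦ ρBD t` is affine and sends `(-1, -1, -1)` to the singlet projector, so the
decomposition amounts to `λ t' + (1 - λ) (-1, -1, -1) = t`, which holds after clearing the
denominator `2λ`. In the degenerate case `λ = 0`, where `t'` is the junk value `0`, the
positivity constraints force `t = (-1, -1, -1)`, so `ρ` is itself the singlet. -/

lemma kron4_σ1_σ1 : kron4 σ1 σ1 = !![0, 0, 0, 1; 0, 0, 1, 0; 0, 1, 0, 0; 1, 0, 0, 0] := by
  ext i j
  fin_cases i <;> fin_cases j <;> simp [kron4, σ1, finProdFinEquiv, Fin.divNat, Fin.modNat]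

lemma kron4_σ2_σ2 : kron4 σ2 σ2 = !![0, 0, 0, -1; 0, 0, 1, 0; 0, 1, 0, 0; -1, 0, 0, 0] := by
  ext i j
  fin_cases i <;> fin_cases j <;> simp [kron4, σ2, finProdFinEquiv, Fin.divNat, Fin.modNat]

lemma kron4_σ3_σ3 : kron4 σ3 σ3 = !![1, 0, 0, 0; 0, -1, 0, 0; 0, 0, -1, 0; 0, 0, 0, 1] := by
  ext i j
  fin_cases i <;> fin_cases j <;> simp [kron4, σ3, finProdFinEquiv, Fin.divNat, Fin.modNat]

lemma proj4_bell_three_eq_ρBD : proj4 (bell 3) = ρBD (-1) (-1) (-1) := by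
  have half : ((Real.sqrt 2 : ℂ))⁻¹ * (Real.sqrt 2 : ℂ)⁻¹ = 1 / 2 := by
    rw [← mul_inv, ← Complex.ofReal_mul, Real.mul_self_sqrt zero_le_two]
    norm_num
  rw [ρBD, kron4_σ1_σ1, kron4_σ2_σ2, kron4_σ3_σ3]
  ext i j
  fin_cases i <;> fin_cases j <;> simp [proj4, bell, vecMulVec, half, one_apply] <;> norm_num

lemma smul_ρBD_add_one_sub_smul_ρBD (c a1 a2 a3 b1 b2 b3 : ℝ) :
    (c : ℂ) • ρBD a1 a2 a3 + ((1 - c : ℝ) : ℂ) • ρBD b1 b2 b3 =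
      ρBD (c * a1 + (1 - c) * b1) (c * a2 + (1 - c) * b2) (c * a3 + (1 - c) * b3) := by
  simp only [ρBD]
  match_scalars <;> ring

theorem bd_ls_decomposition_general (t1 t2 t3 : ℝ)
    (h1 : 0 ≤ 1 + t1 - t2 + t3) (h2 : 0 ≤ 1 - t1 + t2 + t3)
    (h3 : 0 ≤ 1 + t1 + t2 - t3)
    (hent : 3 + t1 + t2 + t3 < 2) :
    ρBD t1 t2 t3 =
      (((3 + t1 + t2 + t3)/2 : ℝ) : ℂ) •
        ρBD ((-1 + t1 - t2 - t3) / (3 + t1 + t2 + t3))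
            ((-1 - t1 + t2 - t3) / (3 + t1 + t2 + t3))
            ((-1 - t1 - t2 + t3) / (3 + t1 + t2 + t3))
      + ((1 - (3 + t1 + t2 + t3)/2 : ℝ) : ℂ) • proj4 (bell 3) ∧
    (3 + t1 + t2 + t3)/2 ∈ Set.Ico (0:ℝ) 1 := by
  have hsum : 0 ≤ 3 + t1 + t2 + t3 := by linarith
  refine ⟨?_, by constructor <;> linarith⟩
  rw [proj4_bell_three_eq_ρBD, smul_ρBD_add_one_sub_smul_ρBD]
  rcases hsum.eq_or_lt with hzero | hpos
  · obtain ⟨rfl, rfl, rfl⟩ : t1 = -1 ∧ t2 = -1 ∧ t3 = -1 := by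
      refine ⟨?_, ?_, ?_⟩ <;> linarith
    norm_num
  · congr 1 <;> field_simp <;> ring

/-- exact Lewenstein–Sanpera decomposition of a Bell decomposable
state in the singlet tetrahedron: ρ = λρ_s + (1−λ)|ψ⁻⟩⟨ψ⁻| with
λ = (3+t₁+t₂+t₃)/2 ∈ [0,1) and ρ_s the BD state with projected parameters t'. -/
theorem bd_ls_decomposition (t1 t2 t3 : ℝ)
    (h1 : 0 ≤ 1 + t1 - t2 + t3) (h2 : 0 ≤ 1 - t1 + t2 + t3)
    (h3 : 0 ≤ 1 + t1 + t2 - t3) (h4 : 0 ≤ 1 - t1 - t2 - t3)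
    (hent : 3 + t1 + t2 + t3 < 2) :
    ρBD t1 t2 t3 =
      (((3 + t1 + t2 + t3)/2 : ℝ) : ℂ) •
        ρBD ((-1 + t1 - t2 - t3) / (3 + t1 + t2 + t3))
            ((-1 - t1 + t2 - t3) / (3 + t1 + t2 + t3))
            ((-1 - t1 - t2 + t3) / (3 + t1 + t2 + t3))
      + ((1 - (3 + t1 + t2 + t3)/2 : ℝ) : ℂ) • proj4 (bell 3) ∧
    (3 + t1 + t2 + t3)/2 ∈ Set.Ico (0:ℝ) 1 :=
  bd_ls_decomposition_general t1 t2 t3 h1 h2 h3 hent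

end
end

section
/- For a Bell decomposable state in the singlet entangled tetrahedron (p₄ > 1/2), the concurrence equals C(ρ) = 2p₄ − 1 = −(1+t₁+t₂+t₃)/2, and hence the weight of the pure part in the Lewenstein–Sanpera decomposition satisfies 1−λ = C(ρ). -/
/-! A Bell-diagonal state is an X-shaped matrix `xMatrix a b c d` with real entries, and for such
matrices `ρ (σ₂⊗σ₂) ρ̄ (σ₂⊗σ₂)` is again X-shaped, with eigenvalues `(a ± b)²`, `(c ± d)²`. For `ρBD`
these are the squared Bell weights `pᵢ²`, so the `μᵢ` are the `pᵢ` themselves, and when `p₄` is the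
largest weight Wootters' combination is `p₄ - p₁ - p₂ - p₃ = 2p₄ - 1`. -/

open Matrix Kronecker Complex BigOperators

noncomputable section

/-- spin-flip matrix σ₂⊗σ₂ -/
def spinFlip : Matrix (Fin 4) (Fin 4) ℂ := kron4 σ2 σ2

/-- Wootters concurrence: max(0, μ₁−μ₂−μ₃−μ₄) where μᵢ are the decreasingly
ordered square roots of the eigenvalues of ρ(σ₂⊗σ₂)ρ̄(σ₂⊗σ₂). -/
def concurrence (ρ : Matrix (Fin 4) (Fin 4) ℂ) : ℝ :=
  let R := ρ * spinFlip * ρ.map (starRingEnd ℂ) * spinFlip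
  let l := (R.charpoly.roots.map (fun z => Real.sqrt z.re)).sort (· ≤ ·)
  max 0 (l.getD 3 0 - l.getD 2 0 - l.getD 1 0 - l.getD 0 0)

open Polynomial

def xMatrix {R : Type*} [Zero R] (a b c d : R) : Matrix (Fin 4) (Fin 4) R :=
  !![a, 0, 0, b; 0, c, d, 0; 0, d, c, 0; b, 0, 0, a]

def woottersCombination (s : Multiset ℝ) : ℝ :=
  let l := s.sort (· ≤ ·)
  l.getD 3 0 - l.getD 2 0 - l.getD 1 0 - l.getD 0 0

lemma xMatrix_map {R S : Type*} [Zero R] [Zero S] (f : R → S) (hf : f 0 = 0) (a b c d : R) :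
    (xMatrix a b c d).map f = xMatrix (f a) (f b) (f c) (f d) := by
  ext i j
  fin_cases i <;> fin_cases j <;> simp [xMatrix, hf]

lemma spinFlip_eq : spinFlip = !![0, 0, 0, -1; 0, 0, 1, 0; 0, 1, 0, 0; -1, 0, 0, 0] := by
  ext i j
  fin_cases i <;> fin_cases j <;>
    simp [spinFlip, kron4, σ2, finProdFinEquiv, Fin.divNat, Fin.modNat]

lemma xMatrix_mul_spinFlip_mul_xMatrix_mul_spinFlip (a b c d a' b' c' d' : ℂ) :
    xMatrix a b c d * spinFlip * xMatrix a' b' c' d' * spinFlip =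
      xMatrix (a * a' + b * b') (a * b' + b * a') (c * c' + d * d') (c * d' + d * c') := by
  rw [spinFlip_eq]
  ext i j
  fin_cases i <;> fin_cases j <;> simp [xMatrix, mul_apply, Fin.sum_univ_four] <;> ring

lemma charpoly_xMatrix {R : Type*} [CommRing R] (a b c d : R) :
    (xMatrix a b c d).charpoly =
      (({a + b, a - b, c + d, c - d} : Multiset R).map fun x => X - C x).prod := by
  have hchar : charmatrix (xMatrix a b c d) =
      !![X - C a, 0, 0, -C b; 0, X - C c, -C d, 0; 0, -C d, X - C c, 0; -C b, 0, 0, X - C a] := by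
    ext i j
    fin_cases i <;> fin_cases j <;> simp [xMatrix]
  rw [Matrix.charpoly, hchar]
  simp [det_succ_row_zero, Fin.sum_univ_succ, Fin.succAbove]
  ring

lemma roots_charpoly_xMatrix {R : Type*} [CommRing R] [IsDomain R] (a b c d : R) :
    (xMatrix a b c d).charpoly.roots = {a + b, a - b, c + d, c - d} := by
  rw [charpoly_xMatrix, roots_multiset_prod_X_sub_C]

lemma ρBD_eq_xMatrix (t1 t2 t3 : ℝ) :
    ρBD t1 t2 t3 = xMatrix (((1 + t3) / 4 : ℝ) : ℂ) (((t1 - t2) / 4 : ℝ) : ℂ)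
      (((1 - t3) / 4 : ℝ) : ℂ) (((t1 + t2) / 4 : ℝ) : ℂ) := by
  ext i j
  fin_cases i <;> fin_cases j <;>
    simp [ρBD, xMatrix, kron4, σ1, σ2, σ3, finProdFinEquiv, Fin.divNat, Fin.modNat, one_apply] <;>
    ring

lemma concurrence_xMatrix_ofReal (a b c d : ℝ) :
    concurrence (xMatrix (a : ℂ) b c d) =
      max 0 (woottersCombination {|a + b|, |a - b|, |c + d|, |c - d|}) := by
  have hconj : (xMatrix (a : ℂ) b c d).map (starRingEnd ℂ) = xMatrix (a : ℂ) b c d := by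
    simp only [xMatrix_map _ (map_zero _), conj_ofReal]
  have hsum_sq (x y : ℝ) : (x : ℂ) * x + y * y + (x * y + y * x) = ((x + y) ^ 2 : ℝ) := by
    push_cast; ring
  have hdiff_sq (x y : ℝ) : (x : ℂ) * x + y * y - (x * y + y * x) = ((x - y) ^ 2 : ℝ) := by
    push_cast; ring
  -- `concurrence` unfolds to `woottersCombination` of the square roots of the eigenvalues
  show max 0 (woottersCombination _) = _
  rw [hconj, xMatrix_mul_spinFlip_mul_xMatrix_mul_spinFlip, roots_charpoly_xMatrix]
  congr 2
  simp only [Multiset.insert_eq_cons, Multiset.map_cons, Multiset.map_singleton, hsum_sq, hdiff_sq,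
    ofReal_re, Real.sqrt_sq_eq_abs]

lemma woottersCombination_of_le (a b c d : ℝ) (ha : a ≤ d) (hb : b ≤ d) (hc : c ≤ d) :
    woottersCombination {a, b, c, d} = d - a - b - c := by
  have hperm := Multiset.sort_eq {a, b, c, d} (· ≤ ·)
  have hsorted := Multiset.pairwise_sort {a, b, c, d} (· ≤ ·)
  unfold woottersCombination
  generalize Multiset.sort {a, b, c, d} (· ≤ ·) = l at hperm hsorted ⊢
  have hlen : l.length = 4 := by simpa using congrArg Multiset.card hperm
  match l, hlen with
  | [x0, x1, x2, x3], _ =>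
    have hsum : x0 + x1 + x2 + x3 = a + b + c + d := by
      simpa [add_assoc] using congrArg Multiset.sum hperm
    have hd : d ∈ [x0, x1, x2, x3] := by rw [← Multiset.mem_coe, hperm]; simp
    have hx3 : x3 ∈ ({a, b, c, d} : Multiset ℝ) := by rw [← hperm]; simp
    simp only [List.pairwise_cons, List.mem_cons, List.not_mem_nil, or_false, forall_eq_or_imp,
      forall_eq, IsEmpty.forall_iff, implies_true, List.Pairwise.nil, and_self, and_true,
      Multiset.insert_eq_cons, Multiset.mem_cons, Multiset.mem_singleton] at hsorted hd hx3
    obtain ⟨⟨h01, h02, h03⟩, ⟨h12, h13⟩, h23⟩ := hsorted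
    have hx3d : x3 = d := by
      apply le_antisymm
      · rcases hx3 with h | h | h | h <;> linarith
      · rcases hd with h | h | h | h <;> linarith
    show x3 - x2 - x1 - x0 = _
    linarith

lemma concurrence_ρBD (t1 t2 t3 : ℝ) :
    concurrence (ρBD t1 t2 t3) = max 0 (woottersCombination
      {|(1 + t1 - t2 + t3) / 4|, |(1 - t1 + t2 + t3) / 4|,
        |(1 + t1 + t2 - t3) / 4|, |(1 - t1 - t2 - t3) / 4|}) := by
  rw [ρBD_eq_xMatrix, concurrence_xMatrix_ofReal]
  ring_nf

/-- for a Bell decomposable state in the singlet tetrahedron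
(p₄ > 1/2) the concurrence equals 2p₄−1 = −(1+t₁+t₂+t₃)/2, hence the weight of
the pure part in the L-S decomposition satisfies 1−λ = C(ρ). -/
theorem bd_concurrence
    (p1 p2 p3 p4 : ℝ) (hp1 : 0 ≤ p1) (hp2 : 0 ≤ p2) (hp3 : 0 ≤ p3) (hp4 : 0 ≤ p4)
    (hsum : p1 + p2 + p3 + p4 = 1) (h4 : 1/2 < p4)
    (t1 t2 t3 : ℝ)
    (ht1 : t1 = p1 - p2 + p3 - p4) (ht2 : t2 = -p1 + p2 + p3 - p4)
    (ht3 : t3 = p1 + p2 - p3 - p4) :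
    concurrence (ρBD t1 t2 t3) = 2 * p4 - 1 ∧
    2 * p4 - 1 = -(1 + t1 + t2 + t3)/2 ∧
    1 - (3 + t1 + t2 + t3)/2 = concurrence (ρBD t1 t2 t3) := by
  have hw1 : (1 + t1 - t2 + t3) / 4 = p1 := by linarith
  have hw2 : (1 - t1 + t2 + t3) / 4 = p2 := by linarith
  have hw3 : (1 + t1 + t2 - t3) / 4 = p3 := by linarith
  have hw4 : (1 - t1 - t2 - t3) / 4 = p4 := by linarith
  have hC : concurrence (ρBD t1 t2 t3) = 2 * p4 - 1 := by
    rw [concurrence_ρBD, hw1, hw2, hw3, hw4, abs_of_nonneg hp1, abs_of_nonneg hp2,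
      abs_of_nonneg hp3, abs_of_nonneg hp4,
      woottersCombination_of_le p1 p2 p3 p4 (by linarith) (by linarith) (by linarith),
      max_eq_right (by linarith)]
    linarith
  exact ⟨hC, by linarith, by linarith⟩

end
end

section
/- For a Bell decomposable state ρ with p₄ > 1/2 one has the decomposition ρ = Σ_{α=1}^{6} Λ_α |e_α,f_α⟩⟨e_α,f_α| + (1−λ)|ψ⁻⟩⟨ψ⁻|, where Λ₁ = Λ₂ = λ₁⁻/2, Λ₃ = Λ₄ = λ₂⁻/2, Λ₅ = Λ₆ = λ₃⁻/2 with λᵢ⁻ as above, and the product vectors are |x₊⟩⊗|x₋⟩, |x₋⟩⊗|x₊⟩, |y₊⟩⊗|y₋⟩, |y₋⟩⊗|y₊⟩, |z₊⟩⊗|z₋⟩, |z₋⟩⊗|z₊⟩. -/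
open Matrix Kronecker Complex BigOperators

noncomputable section

/-- eigenvectors of σ₁, σ₂, σ₃ with eigenvalues ±1 -/
def xp : Fin 2 → ℂ := ![(Real.sqrt 2)⁻¹, (Real.sqrt 2)⁻¹]
def xm : Fin 2 → ℂ := ![(Real.sqrt 2)⁻¹, -(Real.sqrt 2)⁻¹]
def yp : Fin 2 → ℂ := ![(Real.sqrt 2)⁻¹, Complex.I * (Real.sqrt 2)⁻¹]
def ym : Fin 2 → ℂ := ![(Real.sqrt 2)⁻¹, -Complex.I * (Real.sqrt 2)⁻¹]
def zp : Fin 2 → ℂ := ![1, 0]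
def zm : Fin 2 → ℂ := ![0, 1]

def ρ1m : Matrix (Fin 4) (Fin 4) ℂ :=
  (1/2 : ℂ) • (kron4 (proj2 xp) (proj2 xm) + kron4 (proj2 xm) (proj2 xp))
def ρ2m : Matrix (Fin 4) (Fin 4) ℂ :=
  (1/2 : ℂ) • (kron4 (proj2 yp) (proj2 ym) + kron4 (proj2 ym) (proj2 yp))
def ρ3m : Matrix (Fin 4) (Fin 4) ℂ :=
  (1/2 : ℂ) • (kron4 (proj2 zp) (proj2 zm) + kron4 (proj2 zm) (proj2 zp))

/-- a 2-qubit state is separable if it is a convex combination of tensor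
products of pure-state projectors -/
def IsSepState (ρ : Matrix (Fin 4) (Fin 4) ℂ) : Prop :=
  ∃ (n : ℕ) (w : Fin n → ℝ) (u v : Fin n → (Fin 2 → ℂ)),
    (∀ k, 0 ≤ w k) ∧ (∀ k, ∑ i, Complex.normSq (u k i) = 1) ∧
    (∀ k, ∑ i, Complex.normSq (v k i) = 1) ∧
    ρ = ∑ k, (w k : ℂ) • kron4 (proj2 (u k)) (proj2 (v k))

/-- Kronecker (tensor) product of two qubit vectors, in the basis
|00⟩,|01⟩,|10⟩,|11⟩. -/
def kv (u v : Fin 2 → ℂ) : Fin 4 → ℂ :=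
  ![u 0 * v 0, u 0 * v 1, u 1 * v 0, u 1 * v 1]

/-!
In the Pauli basis everything is a combination of `1` and the `σₖ ⊗ σₖ`. The eigenprojectors of
`σₖ` are `½(1 ± σₖ)`, so `|k₊,k₋⟩⟨k₊,k₋| + |k₋,k₊⟩⟨k₋,k₊| = ½(1 - σₖ ⊗ σₖ)`, and the singlet
projector is `¼(1 - Σₖ σₖ ⊗ σₖ)`. Comparing coefficients, the identity reduces to
`λ₁⁻ + λ₂⁻ + λ₃⁻ = λ` and `λ - λₖ⁻ = 1 + tₖ`.
-/

def kron4Bilinear :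
    Matrix (Fin 2) (Fin 2) ℂ →ₗ[ℂ] Matrix (Fin 2) (Fin 2) ℂ →ₗ[ℂ] Matrix (Fin 4) (Fin 4) ℂ :=
  (kroneckerBilinear (R := ℂ) (α := ℂ)).compr₂
    (reindexLinearEquiv ℂ ℂ finProdFinEquiv finProdFinEquiv).toLinearMap

lemma kron4Bilinear_apply (A B : Matrix (Fin 2) (Fin 2) ℂ) : kron4Bilinear A B = kron4 A B := rfl

lemma kron4_one_one : kron4 1 1 = 1 := by
  simp [kron4]

lemma kron4_opposite_halves_add (A : Matrix (Fin 2) (Fin 2) ℂ) :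
    kron4 ((1/2 : ℂ) • (1 + A)) ((1/2 : ℂ) • (1 - A))
        + kron4 ((1/2 : ℂ) • (1 - A)) ((1/2 : ℂ) • (1 + A))
      = (1/2 : ℂ) • (1 - kron4 A A) := by
  simp only [← kron4Bilinear_apply, map_add, map_sub, map_smul, LinearMap.add_apply,
    LinearMap.sub_apply, LinearMap.smul_apply]
  rw [kron4Bilinear_apply 1 1, kron4_one_one]
  module

lemma kron4_apply (A B : Matrix (Fin 2) (Fin 2) ℂ) (i₁ i₂ j₁ j₂ : Fin 2) :
    kron4 A B (finProdFinEquiv (i₁, i₂)) (finProdFinEquiv (j₁, j₂)) = A i₁ j₁ * B i₂ j₂ := by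
  simp [kron4]

lemma proj4_kv (u v : Fin 2 → ℂ) : proj4 (kv u v) = kron4 (proj2 u) (proj2 v) := by
  ext i j
  obtain ⟨⟨i₁, i₂⟩, rfl⟩ := (finProdFinEquiv : Fin 2 × Fin 2 ≃ Fin 4).surjective i
  obtain ⟨⟨j₁, j₂⟩, rfl⟩ := (finProdFinEquiv : Fin 2 × Fin 2 ≃ Fin 4).surjective j
  rw [kron4_apply]
  fin_cases i₁ <;> fin_cases i₂ <;> fin_cases j₁ <;> fin_cases j₂ <;>
    simp [proj4, proj2, kv, vecMulVec_apply, finProdFinEquiv] <;> ring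

lemma ofReal_sqrt_two_sq : ((Real.sqrt 2 : ℝ) : ℂ) ^ 2 = 2 := by
  rw [← Complex.ofReal_pow, Real.sq_sqrt zero_le_two]
  norm_num

lemma proj2_xp : proj2 xp = (1/2 : ℂ) • (1 + σ1) := by
  ext i j
  fin_cases i <;> fin_cases j <;>
    simp [proj2, xp, σ1, vecMulVec_apply] <;> ring_nf <;> simp [ofReal_sqrt_two_sq]

lemma proj2_xm : proj2 xm = (1/2 : ℂ) • (1 - σ1) := by
  ext i j
  fin_cases i <;> fin_cases j <;>
    simp [proj2, xm, σ1, vecMulVec_apply] <;> ring_nf <;> simp [ofReal_sqrt_two_sq]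

lemma proj2_yp : proj2 yp = (1/2 : ℂ) • (1 + σ2) := by
  ext i j
  fin_cases i <;> fin_cases j <;>
    simp [proj2, yp, σ2, vecMulVec_apply] <;> ring_nf <;> simp [ofReal_sqrt_two_sq, mul_comm]

lemma proj2_ym : proj2 ym = (1/2 : ℂ) • (1 - σ2) := by
  ext i j
  fin_cases i <;> fin_cases j <;>
    simp [proj2, ym, σ2, vecMulVec_apply] <;> ring_nf <;> simp [ofReal_sqrt_two_sq, mul_comm]

lemma proj2_zp : proj2 zp = (1/2 : ℂ) • (1 + σ3) := by
  ext i j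
  fin_cases i <;> fin_cases j <;>
    simp [proj2, zp, σ3, vecMulVec_apply]; norm_num

lemma proj2_zm : proj2 zm = (1/2 : ℂ) • (1 - σ3) := by
  ext i j
  fin_cases i <;> fin_cases j <;>
    simp [proj2, zm, σ3, vecMulVec_apply]; norm_num

lemma ρ1m_eq_pauli : ρ1m = (1/4 : ℂ) • (1 - kron4 σ1 σ1) := by
  rw [ρ1m, proj2_xp, proj2_xm, kron4_opposite_halves_add]
  module

lemma ρ2m_eq_pauli : ρ2m = (1/4 : ℂ) • (1 - kron4 σ2 σ2) := by
  rw [ρ2m, proj2_yp, proj2_ym, kron4_opposite_halves_add]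
  module

lemma ρ3m_eq_pauli : ρ3m = (1/4 : ℂ) • (1 - kron4 σ3 σ3) := by
  rw [ρ3m, proj2_zp, proj2_zm, kron4_opposite_halves_add]
  module

lemma proj4_bell_three_eq_pauli :
    proj4 (bell 3) = (1/4 : ℂ) • (1 - kron4 σ1 σ1 - kron4 σ2 σ2 - kron4 σ3 σ3) := by
  ext i j
  obtain ⟨⟨i₁, i₂⟩, rfl⟩ := (finProdFinEquiv : Fin 2 × Fin 2 ≃ Fin 4).surjective i
  obtain ⟨⟨j₁, j₂⟩, rfl⟩ := (finProdFinEquiv : Fin 2 × Fin 2 ≃ Fin 4).surjective j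
  simp only [Matrix.smul_apply, Matrix.sub_apply, kron4_apply]
  fin_cases i₁ <;> fin_cases i₂ <;> fin_cases j₁ <;> fin_cases j₂ <;>
    simp [proj4, bell, σ1, σ2, σ3, vecMulVec_apply, finProdFinEquiv, one_apply] <;> ring_nf <;>
    norm_num [ofReal_sqrt_two_sq]

theorem bd_product_decomposition_general
    (t1 t2 t3 lam lam1 lam2 lam3 : ℝ)
    (hlam : lam = (3 + t1 + t2 + t3)/2)
    (hlam1 : lam1 = (1 - t1 + t2 + t3)/2)
    (hlam2 : lam2 = (1 + t1 - t2 + t3)/2)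
    (hlam3 : lam3 = (1 + t1 + t2 - t3)/2) :
    ρBD t1 t2 t3 =
      ((lam1/2 : ℝ) : ℂ) • proj4 (kv xp xm) + ((lam1/2 : ℝ) : ℂ) • proj4 (kv xm xp)
      + ((lam2/2 : ℝ) : ℂ) • proj4 (kv yp ym) + ((lam2/2 : ℝ) : ℂ) • proj4 (kv ym yp)
      + ((lam3/2 : ℝ) : ℂ) • proj4 (kv zp zm) + ((lam3/2 : ℝ) : ℂ) • proj4 (kv zm zp)
      + ((1 - lam : ℝ) : ℂ) • proj4 (bell 3) := by
  calc ρBD t1 t2 t3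
      = (lam1 : ℂ) • ρ1m + (lam2 : ℂ) • ρ2m + (lam3 : ℂ) • ρ3m
          + ((1 - lam : ℝ) : ℂ) • proj4 (bell 3) := by
        rw [ρBD, ρ1m_eq_pauli, ρ2m_eq_pauli, ρ3m_eq_pauli, proj4_bell_three_eq_pauli,
          hlam, hlam1, hlam2, hlam3]
        push_cast
        module
    _ = _ := by
        simp only [ρ1m, ρ2m, ρ3m, proj4_kv]
        push_cast
        module

/-- for a Bell decomposable state with p₄ > 1/2,
ρ = Σ_{α=1}^{6} Λ_α |e_α,f_α⟩⟨e_α,f_α| + (1−λ)|ψ⁻⟩⟨ψ⁻| with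
Λ₁ = Λ₂ = λ₁⁻/2, Λ₃ = Λ₄ = λ₂⁻/2, Λ₅ = Λ₆ = λ₃⁻/2 and product vectors
|x₊⟩⊗|x₋⟩, |x₋⟩⊗|x₊⟩, |y₊⟩⊗|y₋⟩, |y₋⟩⊗|y₊⟩, |z₊⟩⊗|z₋⟩, |z₋⟩⊗|z₊⟩. -/
theorem bd_product_decomposition
    (p1 p2 p3 p4 : ℝ) (hp1 : 0 ≤ p1) (hp2 : 0 ≤ p2) (hp3 : 0 ≤ p3) (hp4 : 0 ≤ p4)
    (hsum : p1 + p2 + p3 + p4 = 1) (h4 : 1/2 < p4)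
    (t1 t2 t3 lam lam1 lam2 lam3 : ℝ)
    (ht1 : t1 = p1 - p2 + p3 - p4) (ht2 : t2 = -p1 + p2 + p3 - p4)
    (ht3 : t3 = p1 + p2 - p3 - p4)
    (hlam : lam = (3 + t1 + t2 + t3)/2)
    (hlam1 : lam1 = (1 - t1 + t2 + t3)/2)
    (hlam2 : lam2 = (1 + t1 - t2 + t3)/2)
    (hlam3 : lam3 = (1 + t1 + t2 - t3)/2) :
    ρBD t1 t2 t3 =
      ((lam1/2 : ℝ) : ℂ) • proj4 (kv xp xm) + ((lam1/2 : ℝ) : ℂ) • proj4 (kv xm xp)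
      + ((lam2/2 : ℝ) : ℂ) • proj4 (kv yp ym) + ((lam2/2 : ℝ) : ℂ) • proj4 (kv ym yp)
      + ((lam3/2 : ℝ) : ℂ) • proj4 (kv zp zm) + ((lam3/2 : ℝ) : ℂ) • proj4 (kv zm zp)
      + ((1 - lam : ℝ) : ℂ) • proj4 (bell 3) :=
  bd_product_decomposition_general t1 t2 t3 lam lam1 lam2 lam3 hlam hlam1 hlam2 hlam3

end
end

section
/- Under an invertible local transformation ρ' = (A⊗B)ρ(A⊗B)†/tr((A⊗B)ρ(A⊗B)†) with A = μ(I+a m·σ), B = ν(I+b n·σ), 0 ≤ a,b < 1, unit vectors m,n, the concurrence transforms as C(ρ') = μ²ν²(1−a²)(1−b²)·C(ρ)/tr((A⊗B)ρ(A⊗B)†). -/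
/-!
For a 2×2 matrix `X` one has `Xᵀ σ₂ X = det X • σ₂`, so `M = A ⊗ B` satisfies
`Mᵀ (σ₂⊗σ₂) M = d • (σ₂⊗σ₂)` with `d = det A · det B`. Substituting this (and its complex
conjugate) into the spin-flipped product `R(ρ) = ρ (σ₂⊗σ₂) ρ̄ (σ₂⊗σ₂)` gives
`R(M ρ M†) = |d|² • M R(ρ) M⁻¹`, so the eigenvalues of `R` scale by `|d|²`, their square roots
by `|d|`, and hence so does the concurrence. A real normalisation `c • ρ` likewise scales it by
`|c|`, and for a unit vector `m` the filter has `det (μ (I + a m·σ)) = μ² (1 - a²)`.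
-/

open Matrix Kronecker Complex BigOperators

noncomputable section

/-- filtration operator μ(I + a m·σ) -/
def filt (μ a : ℝ) (m : Fin 3 → ℝ) : Matrix (Fin 2) (Fin 2) ℂ :=
  (μ : ℂ) • ((1 : Matrix (Fin 2) (Fin 2) ℂ)
    + (a : ℂ) • ((m 0 : ℂ) • σ1 + (m 1 : ℂ) • σ2 + (m 2 : ℂ) • σ3))

namespace Matrix

variable {n K : Type*} [Fintype n] [DecidableEq n] [Field K]

open Polynomial in
theorem charpoly_smul_eq_scaleRoots [Infinite K] (M : Matrix n n K) {c : K} (hc : c ≠ 0) :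
    (c • M).charpoly = M.charpoly.scaleRoots c := by
  refine Polynomial.funext fun z => ?_
  obtain ⟨w, rfl⟩ : ∃ w, z = c * w := ⟨c⁻¹ * z, by field_simp⟩
  have hsub : scalar n (c * w) - c • M = c • (scalar n w - M) := by
    rw [smul_sub, scalar_apply, scalar_apply, ← diagonal_smul]; rfl
  rw [eval_charpoly, hsub, det_smul, ← eval_charpoly, scaleRoots_eval_mul,
    charpoly_natDegree_eq_dim]

theorem charpoly_conj_of_isUnit_det (R : Matrix n n K) {M : Matrix n n K} (hM : IsUnit M.det) :
    (M * R * M⁻¹).charpoly = R.charpoly := by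
  rw [Matrix.mul_assoc, charpoly_mul_comm, Matrix.mul_assoc, nonsing_inv_mul _ hM, Matrix.mul_one]

theorem charpoly_roots_smul [Infinite K] (M : Matrix n n K) {c : K} (hc : c ≠ 0) :
    (c • M).charpoly.roots = M.charpoly.roots.map (c * ·) := by
  rw [charpoly_smul_eq_scaleRoots _ hc, Polynomial.roots_scaleRoots _ (Ne.isUnit hc)]

end Matrix

def spinFlipProduct (ρ : Matrix (Fin 4) (Fin 4) ℂ) : Matrix (Fin 4) (Fin 4) ℂ :=
  ρ * spinFlip * ρ.map (starRingEnd ℂ) * spinFlip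

theorem concurrence_eq_mul_of_roots {ρ ρ' : Matrix (Fin 4) (Fin 4) ℂ} {k : ℝ} (hk : 0 < k)
    (h : (spinFlipProduct ρ').charpoly.roots
      = (spinFlipProduct ρ).charpoly.roots.map ((k : ℂ) * ·)) :
    concurrence ρ' = √k * concurrence ρ := by
  set s := (spinFlipProduct ρ).charpoly.roots.map (fun z => √z.re)
  have hroots : (spinFlipProduct ρ').charpoly.roots.map (fun z => √z.re) = s.map (√k * ·) := by
    rw [h, Multiset.map_map, Multiset.map_map]
    refine Multiset.map_congr rfl fun z _ => ?_
    simp only [Function.comp_apply, Complex.re_ofReal_mul, Real.sqrt_mul hk.le]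
  have hsort : (s.map (√k * ·)).sort (· ≤ ·) = (s.sort (· ≤ ·)).map (√k * ·) :=
    (Multiset.map_sort _ _ _ _
      fun a _ b _ => (mul_le_mul_iff_right₀ (Real.sqrt_pos.2 hk) (b := a) (c := b)).symm).symm
  have hget : ∀ i, ((s.sort (· ≤ ·)).map (√k * ·)).getD i 0 = √k * (s.sort (· ≤ ·)).getD i 0 :=
    fun i => by simpa using List.getD_map (l := s.sort (· ≤ ·)) (n := i) (d := 0) (√k * ·)
  simp only [concurrence]
  rw [show ρ' * spinFlip * ρ'.map (starRingEnd ℂ) * spinFlip = spinFlipProduct ρ' from rfl,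
    show ρ * spinFlip * ρ.map (starRingEnd ℂ) * spinFlip = spinFlipProduct ρ from rfl,
    hroots, hsort, hget, hget, hget, hget, mul_max_of_nonneg _ _ (Real.sqrt_nonneg k), mul_zero]
  simp only [s, mul_sub]

theorem spinFlipProduct_smul (c : ℂ) (X : Matrix (Fin 4) (Fin 4) ℂ) :
    spinFlipProduct (c • X) = (normSq c : ℂ) • spinFlipProduct X := by
  simp only [spinFlipProduct, Matrix.map_smul' _ c X (map_mul (starRingEnd ℂ)), Matrix.smul_mul,
    Matrix.mul_smul, smul_smul, mul_comm _ c, Complex.mul_conj]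

theorem concurrence_smul {c : ℂ} (hc : c ≠ 0) (X : Matrix (Fin 4) (Fin 4) ℂ) :
    concurrence (c • X) = ‖c‖ * concurrence X :=
  concurrence_eq_mul_of_roots (normSq_pos.2 hc) <| by
    rw [spinFlipProduct_smul, Matrix.charpoly_roots_smul _ (ofReal_ne_zero.2 (normSq_pos.2 hc).ne')]

theorem spinFlip_map_conj : spinFlip.map (starRingEnd ℂ) = spinFlip := by
  have hσ : ∀ p q, starRingEnd ℂ (σ2 p q) = -σ2 p q := by
    intro p q
    fin_cases p <;> fin_cases q <;> simp [σ2]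
  ext i j
  simp only [spinFlip, kron4, reindex_apply, submatrix_apply, map_apply, kroneckerMap_apply,
    map_mul, hσ, neg_mul_neg]

theorem spinFlipProduct_conj {M : Matrix (Fin 4) (Fin 4) ℂ} {d : ℂ}
    (hM : Mᵀ * spinFlip * M = d • spinFlip) (hdet : IsUnit M.det) (ρ : Matrix (Fin 4) (Fin 4) ℂ) :
    spinFlipProduct (M * ρ * Mᴴ) = (normSq d : ℂ) • (M * spinFlipProduct ρ * M⁻¹) := by
  have hright : Mᵀ * spinFlip = d • (spinFlip * M⁻¹) := by
    rw [← Matrix.mul_one (Mᵀ * spinFlip), ← mul_nonsing_inv M hdet, ← Matrix.mul_assoc, hM,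
      Matrix.smul_mul]
  have hleft : Mᴴ * spinFlip * M.map (starRingEnd ℂ) = starRingEnd ℂ d • spinFlip := by
    have hconj := congrArg (Matrix.map · (starRingEnd ℂ)) hM
    simp only [Matrix.map_mul, Matrix.map_smul' _ _ _ (map_mul (starRingEnd ℂ)),
      spinFlip_map_conj] at hconj
    exact hconj
  have hmap : (M * ρ * Mᴴ).map (starRingEnd ℂ)
      = M.map (starRingEnd ℂ) * ρ.map (starRingEnd ℂ) * Mᵀ := by
    rw [Matrix.map_mul, Matrix.map_mul]
    congr 1
    ext i j
    simp
  calc spinFlipProduct (M * ρ * Mᴴ)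
      = M * ρ * (Mᴴ * spinFlip * M.map (starRingEnd ℂ)) * ρ.map (starRingEnd ℂ)
          * (Mᵀ * spinFlip) := by
        rw [spinFlipProduct, hmap]
        simp only [Matrix.mul_assoc]
    _ = (normSq d : ℂ) • (M * spinFlipProduct ρ * M⁻¹) := by
        rw [hleft, hright, ← Complex.mul_conj]
        simp only [spinFlipProduct, Matrix.mul_smul, Matrix.smul_mul, smul_smul, Matrix.mul_assoc]

theorem concurrence_conj {M : Matrix (Fin 4) (Fin 4) ℂ} {d : ℂ}
    (hM : Mᵀ * spinFlip * M = d • spinFlip) (hdet : IsUnit M.det) (hd : d ≠ 0)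
    (ρ : Matrix (Fin 4) (Fin 4) ℂ) :
    concurrence (M * ρ * Mᴴ) = ‖d‖ * concurrence ρ :=
  concurrence_eq_mul_of_roots (normSq_pos.2 hd) <| by
    rw [spinFlipProduct_conj hM hdet,
      Matrix.charpoly_roots_smul _ (ofReal_ne_zero.2 (normSq_pos.2 hd).ne'),
      Matrix.charpoly_conj_of_isUnit_det _ hdet]

theorem transpose_mul_σ2_mul (X : Matrix (Fin 2) (Fin 2) ℂ) : Xᵀ * σ2 * X = X.det • σ2 := by
  ext i j
  fin_cases i <;> fin_cases j <;>
    simp [Matrix.mul_apply, Fin.sum_univ_two, σ2, Matrix.det_fin_two] <;> ring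

theorem kron4_mul (A B C D : Matrix (Fin 2) (Fin 2) ℂ) :
    kron4 A B * kron4 C D = kron4 (A * C) (B * D) := by
  rw [kron4, kron4, kron4, reindex_apply, reindex_apply, reindex_apply, submatrix_mul_equiv,
    mul_kronecker_mul]

theorem kron4_transpose (A B : Matrix (Fin 2) (Fin 2) ℂ) : (kron4 A B)ᵀ = kron4 Aᵀ Bᵀ := by
  rw [kron4, kron4, reindex_apply, reindex_apply, transpose_submatrix, kroneckerMap_transpose]

theorem kron4_smul_smul (c d : ℂ) (A B : Matrix (Fin 2) (Fin 2) ℂ) :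
    kron4 (c • A) (d • B) = (c * d) • kron4 A B := by
  rw [kron4, kron4, reindex_apply, reindex_apply, smul_kronecker, kronecker_smul, smul_smul,
    submatrix_smul]
  rfl

theorem kron4_det (A B : Matrix (Fin 2) (Fin 2) ℂ) :
    (kron4 A B).det = A.det ^ 2 * B.det ^ 2 := by
  simp [kron4, det_kronecker]

theorem transpose_kron4_mul_spinFlip_mul (A B : Matrix (Fin 2) (Fin 2) ℂ) :
    (kron4 A B)ᵀ * spinFlip * kron4 A B = (A.det * B.det) • spinFlip := by
  rw [kron4_transpose, spinFlip, kron4_mul, kron4_mul, transpose_mul_σ2_mul, transpose_mul_σ2_mul,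
    kron4_smul_smul]

theorem concurrence_kron4_conj {A B : Matrix (Fin 2) (Fin 2) ℂ} (hA : A.det ≠ 0) (hB : B.det ≠ 0)
    (ρ : Matrix (Fin 4) (Fin 4) ℂ) :
    concurrence (kron4 A B * ρ * (kron4 A B)ᴴ) = ‖A.det * B.det‖ * concurrence ρ :=
  concurrence_conj (transpose_kron4_mul_spinFlip_mul A B)
    (by rw [kron4_det]; exact (mul_ne_zero (pow_ne_zero 2 hA) (pow_ne_zero 2 hB)).isUnit)
    (mul_ne_zero hA hB) ρ

theorem filt_det (μ a : ℝ) {m : Fin 3 → ℝ} (hm : (m 0)^2 + (m 1)^2 + (m 2)^2 = 1) :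
    (filt μ a m).det = ((μ^2 * (1 - a^2) : ℝ) : ℂ) := by
  have hmc : ((m 0 : ℂ))^2 + ((m 1 : ℂ))^2 + ((m 2 : ℂ))^2 = 1 := by exact_mod_cast hm
  rw [det_fin_two]
  simp [filt, σ1, σ2, σ3]
  linear_combination (-(μ:ℂ)^2 * (a:ℂ)^2) * hmc + ((μ:ℂ)^2*(a:ℂ)^2*((m 1 : ℂ))^2) * Complex.I_sq

open scoped ComplexOrder in
theorem concurrence_lqcc_general
    (ρ : Matrix (Fin 4) (Fin 4) ℂ)
    (μ ν a b : ℝ) (hμ : 0 < μ) (hν : 0 < ν)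
    (ha0 : 0 ≤ a) (ha1 : a < 1) (hb0 : 0 ≤ b) (hb1 : b < 1)
    (m n : Fin 3 → ℝ)
    (hm : (m 0)^2 + (m 1)^2 + (m 2)^2 = 1) (hn : (n 0)^2 + (n 1)^2 + (n 2)^2 = 1)
    (N : ℝ) (hNpos : 0 < N) :
    concurrence (((N⁻¹ : ℝ) : ℂ) •
        (kron4 (filt μ a m) (filt ν b n) * ρ * (kron4 (filt μ a m) (filt ν b n))ᴴ))
      = μ^2 * ν^2 * (1 - a^2) * (1 - b^2) * concurrence ρ / N := by
  have hdA : 0 < μ^2 * (1 - a^2) := mul_pos (pow_pos hμ 2) (by nlinarith)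
  have hdB : 0 < ν^2 * (1 - b^2) := mul_pos (pow_pos hν 2) (by nlinarith)
  rw [concurrence_smul (ofReal_ne_zero.2 (inv_pos.2 hNpos).ne'),
    concurrence_kron4_conj (by rw [filt_det μ a hm]; exact_mod_cast hdA.ne')
      (by rw [filt_det ν b hn]; exact_mod_cast hdB.ne'),
    filt_det μ a hm, filt_det ν b hn, ← ofReal_mul, norm_real, norm_real,
    Real.norm_of_nonneg (inv_pos.2 hNpos).le, Real.norm_of_nonneg (mul_pos hdA hdB).le]
  field_simp

open scoped ComplexOrder in
/-- under the invertible local transformation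
ρ' = (A⊗B)ρ(A⊗B)†/tr((A⊗B)ρ(A⊗B)†) with A = μ(I+a m·σ), B = ν(I+b n·σ),
0 ≤ a,b < 1, unit vectors m,n, the concurrence transforms as
C(ρ') = μ²ν²(1−a²)(1−b²)·C(ρ)/tr((A⊗B)ρ(A⊗B)†). -/
theorem concurrence_lqcc
    (ρ : Matrix (Fin 4) (Fin 4) ℂ) (hρ : ρ.PosSemidef) (htr : ρ.trace = 1)
    (μ ν a b : ℝ) (hμ : 0 < μ) (hν : 0 < ν)
    (ha0 : 0 ≤ a) (ha1 : a < 1) (hb0 : 0 ≤ b) (hb1 : b < 1)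
    (m n : Fin 3 → ℝ)
    (hm : (m 0)^2 + (m 1)^2 + (m 2)^2 = 1) (hn : (n 0)^2 + (n 1)^2 + (n 2)^2 = 1)
    (N : ℝ) (hNpos : 0 < N)
    (hN : (kron4 (filt μ a m) (filt ν b n) * ρ * (kron4 (filt μ a m) (filt ν b n))ᴴ).trace
            = (N : ℂ)) :
    concurrence (((N⁻¹ : ℝ) : ℂ) •
        (kron4 (filt μ a m) (filt ν b n) * ρ * (kron4 (filt μ a m) (filt ν b n))ᴴ))
      = μ^2 * ν^2 * (1 - a^2) * (1 - b^2) * concurrence ρ / N :=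
  concurrence_lqcc_general ρ μ ν a b hμ hν ha0 ha1 hb0 hb1 m n hm hn N hNpos

end
end
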